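/- arXiv:2404.06871 — 2 statements merged into one kernel-verified Lean document; each statement's English description precedes it below -/
import Mathlib

section
/- For every natural number n, the n-th iterate of the quantum adjoint action of E applied to K⁻¹ satisfies (ad_E)ⁿ(K⁻¹) = (∏_{j=1}^{n} (1 − q^{−2j}))·Eⁿ·K^{−n−1} in U_q(sl_2) (with the empty product equal to 1 for n = 0). -/
/-! Since `K⁻¹ E = q⁻² E K⁻¹`, applying `ad_E` to `Eⁿ K^{-m}` gives
`E^{n+1} K^{-m-1} − Eⁿ K^{-m} E K^{-1} = (1 − q^{-2m}) E^{n+1} K^{-m-1}`,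
so each iteration multiplies the coefficient by one more factor `1 − q^{-2(n+1)}`. -/

def adE {A : Type*} [Ring A] (E Ki : A) (X : A) : A := (E * X - X * E) * Ki

section QuasiCommuting

variable {R A : Type*} [CommRing R] [Ring A] [Algebra R A]

theorem inv_mul_eq_inv_smul_mul_inv {𝕜 : Type*} [Field 𝕜] [Algebra 𝕜 A] {K Ki E : A} {t : 𝕜}
    (ht : t ≠ 0) (hKKi : K * Ki = 1) (hKiK : Ki * K = 1) (hKE : K * E = t • (E * K)) :
    Ki * E = t⁻¹ • (E * Ki) := by
  have h : Ki * (K * E) * Ki = t • (Ki * E) := by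
    rw [hKE, mul_smul_comm, smul_mul_assoc, ← mul_assoc, mul_assoc _ K, hKKi, mul_one]
  rw [← mul_assoc, hKiK, one_mul] at h
  rw [h, smul_smul, inv_mul_cancel₀ ht, one_smul]

theorem pow_mul_eq_smul_mul_pow {a E : A} {s : R} (h : a * E = s • (E * a)) (m : ℕ) :
    a ^ m * E = s ^ m • (E * a ^ m) := by
  induction m with
  | zero => simp
  | succ m ih =>
    rw [pow_succ, mul_assoc, h, mul_smul_comm, ← mul_assoc, ih, smul_mul_assoc, smul_smul,
      ← pow_succ', mul_assoc]

theorem adE_smul (E Ki : A) (c : R) (X : A) : adE E Ki (c • X) = c • adE E Ki X := by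
  simp only [adE, mul_smul_comm, smul_mul_assoc, ← smul_sub]

theorem adE_pow_mul_pow {Ki E : A} {s : R} (h : Ki * E = s • (E * Ki)) (n m : ℕ) :
    adE E Ki (E ^ n * Ki ^ m) = (1 - s ^ m) • (E ^ (n + 1) * Ki ^ (m + 1)) := by
  rw [adE, mul_assoc (E ^ n), pow_mul_eq_smul_mul_pow h, mul_smul_comm, ← mul_assoc (E ^ n),
    ← pow_succ, ← mul_assoc, ← pow_succ', sub_mul, smul_mul_assoc, mul_assoc, ← pow_succ,
    sub_smul, one_smul]

theorem adE_iterate_inv {Ki E : A} {s : R} (h : Ki * E = s • (E * Ki)) (n : ℕ) :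
    (adE E Ki)^[n] Ki = (∏ j ∈ Finset.range n, (1 - s ^ (j + 1))) • (E ^ n * Ki ^ (n + 1)) := by
  induction n with
  | zero => simp
  | succ n ih =>
    rw [Function.iterate_succ_apply', ih, adE_smul, adE_pow_mul_pow h, Finset.prod_range_succ,
      smul_smul]

end QuasiCommuting

theorem stmt4_general (q : ℂ) (hq0 : q ≠ 0)
    (A : Type*) [Ring A] [Algebra ℂ A] (K Ki E : A)
    (hKKi : K * Ki = 1) (hKiK : Ki * K = 1)
    (hKE : K * E = (q ^ 2) • (E * K))
    (n : ℕ) :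
    (adE E Ki)^[n] Ki
      = (∏ j ∈ Finset.range n, (1 - q ^ (-2 * ((j : ℤ) + 1)))) • (E ^ n * Ki ^ (n + 1)) := by
  have hKiE := inv_mul_eq_inv_smul_mul_inv (pow_ne_zero 2 hq0) hKKi hKiK hKE
  have hexp (j : ℕ) : q ^ (-2 * ((j : ℤ) + 1)) = (q ^ 2)⁻¹ ^ (j + 1) := by
    rw [inv_pow, ← pow_mul, ← zpow_natCast, ← zpow_neg]
    push_cast
    ring_nf
  simp only [hexp]
  exact adE_iterate_inv hKiE n

/-- For every natural number `n`, the `n`-th iterate of the quantum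
adjoint action of `E` applied to `K⁻¹` satisfies
`(ad_E)ⁿ(K⁻¹) = (∏_{j=1}^{n} (1 − q^{−2j}))·Eⁿ·K^{−n−1}` in `U_q(sl_2)`
(with the empty product equal to `1` for `n = 0`). -/
theorem stmt4 (q : ℂ) (hq0 : q ≠ 0) (hq1 : q ^ 2 ≠ 1)
    (A : Type*) [Ring A] [Algebra ℂ A] (K Ki E F : A)
    (hKKi : K * Ki = 1) (hKiK : Ki * K = 1)
    (hKE : K * E = (q ^ 2) • (E * K))
    (hKF : K * F = (q ^ 2)⁻¹ • (F * K))
    (hEF : E * F - F * E = (q - q⁻¹)⁻¹ • (K - Ki))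
    (n : ℕ) :
    (adE E Ki)^[n] Ki
      = (∏ j ∈ Finset.range n, (1 - q ^ (-2 * ((j : ℤ) + 1)))) • (E ^ n * Ki ^ (n + 1)) :=
  stmt4_general q hq0 A K Ki E hKKi hKiK hKE n
end

section
/- For every natural number n ≥ 1, the quantum adjoint action of F on the monomial K^{n+1}FⁿEⁿ satisfies ad_F(K^{n+1}FⁿEⁿ) = (q^{2n+2} − 1)·K^{n+1}F^{n+1}Eⁿ − q^{n+1}·((qⁿ − q⁻ⁿ)/(q − q⁻¹)²)·K^{n+2}FⁿE^{n−1} + q^{−n−1}·((qⁿ − q⁻ⁿ)/(q − q⁻¹)²)·KⁿFⁿE^{n−1} in U_q(sl_2). -/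
section
variable {A : Type*} [Ring A] [Algebra ℂ A]

lemma pow_comm_right' (c : ℂ) (X Y : A) (h : X * Y = c • (Y * X)) :
    ∀ m : ℕ, X * Y ^ m = c ^ m • (Y ^ m * X) := by
  intro m
  induction m with
  | zero => simp
  | succ k ih =>
      rw [pow_succ, ← mul_assoc, ih, smul_mul_assoc, mul_assoc, h,
        mul_smul_comm, smul_smul, ← mul_assoc, ← pow_succ, pow_succ c]

lemma pow_comm_left' (c : ℂ) (X Y : A) (h : X * Y = c • (Y * X)) :
    ∀ m : ℕ, X ^ m * Y = c ^ m • (Y * X ^ m) := by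
  intro m
  induction m with
  | zero => simp
  | succ k ih =>
      rw [pow_succ, mul_assoc, h, mul_smul_comm, ← mul_assoc, ih,
        smul_mul_assoc, smul_smul, mul_assoc, ← pow_succ, pow_succ c]
      ring_nf

lemma EnF_comm' (q : ℂ) (hq0 : q ≠ 0) (hq1 : q ^ 2 ≠ 1)
    (K Ki E F : A)
    (hKE : K * E = (q ^ 2) • (E * K))
    (hKiE : Ki * E = ((q ^ 2)⁻¹) • (E * Ki))
    (hEF' : E * F - F * E = (q / (q ^ 2 - 1)) • (K - Ki)) :
    ∀ m : ℕ, E ^ (m + 1) * F = F * E ^ (m + 1)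
      + ((q * (q ^ (2 * (m + 1)) - 1)) / (q ^ 2 - 1) ^ 2) • (E ^ m * K)
      - ((q * (q ^ (2 * (m + 1)) - 1)) / (q ^ (2 * m) * (q ^ 2 - 1) ^ 2)) • (E ^ m * Ki) := by
  have hq21 : q ^ 2 - 1 ≠ 0 := sub_ne_zero.mpr hq1
  have base : E * F = F * E + (q / (q ^ 2 - 1)) • (K - Ki) := by
    linear_combination (norm := module) hEF'
  intro m
  induction m with
  | zero =>
      simp only [zero_add, mul_one, pow_one, pow_zero, one_mul, mul_zero]
      rw [base]
      match_scalars
      · ring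
      · field_simp
      · field_simp
  | succ k ih =>
      have hKEk : K * E ^ (k + 1) = (q ^ 2) ^ (k + 1) • (E ^ (k + 1) * K) :=
        pow_comm_right' (q ^ 2) K E hKE (k + 1)
      have hKiEk : Ki * E ^ (k + 1) = ((q ^ 2)⁻¹) ^ (k + 1) • (E ^ (k + 1) * Ki) :=
        pow_comm_right' ((q ^ 2)⁻¹) Ki E hKiE (k + 1)
      have step : E ^ (k + 2) * F = E * (E ^ (k + 1) * F) := by
        rw [← mul_assoc, ← pow_succ']
      have e1 : E * (F * E ^ (k + 1)) = F * E ^ (k + 2)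
          + (q / (q ^ 2 - 1)) • (K * E ^ (k + 1)) - (q / (q ^ 2 - 1)) • (Ki * E ^ (k + 1)) := by
        rw [← mul_assoc, base, add_mul, smul_mul_assoc, sub_mul, mul_assoc,
          ← pow_succ', smul_sub]
        abel
      have e2 : E * (((q * (q ^ (2 * (k + 1)) - 1)) / (q ^ 2 - 1) ^ 2) • (E ^ k * K))
          = ((q * (q ^ (2 * (k + 1)) - 1)) / (q ^ 2 - 1) ^ 2) • (E ^ (k + 1) * K) := by
        rw [mul_smul_comm, ← mul_assoc, ← pow_succ']
      have e3 : E * (((q * (q ^ (2 * (k + 1)) - 1)) / (q ^ (2 * k) * (q ^ 2 - 1) ^ 2)) • (E ^ k * Ki))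
          = ((q * (q ^ (2 * (k + 1)) - 1)) / (q ^ (2 * k) * (q ^ 2 - 1) ^ 2)) • (E ^ (k + 1) * Ki) := by
        rw [mul_smul_comm, ← mul_assoc, ← pow_succ']
      show E ^ (k + 2) * F = _
      rw [step, ih, mul_sub E, mul_add E, e1, e2, e3, hKEk, hKiEk]
      match_scalars
      · ring
      · field_simp
        ring
      · simp only [inv_pow]
        field_simp [pow_ne_zero (2 * k) hq0]
        ring

end

/-- The left quantum adjoint action of `F` on `U_q(sl_2)`:
`ad_F(X) = FX − K⁻¹XKF`. -/
def adF {A : Type*} [Ring A] (F Ki K : A) (X : A) : A := F * X - Ki * X * K * F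

/-- For every natural number `n ≥ 1`, the quantum adjoint action of `F`
on the monomial `K^{n+1}FⁿEⁿ` satisfies
`ad_F(K^{n+1}FⁿEⁿ) = (q^{2n+2} − 1)·K^{n+1}F^{n+1}Eⁿ`
`− q^{n+1}·((qⁿ − q⁻ⁿ)/(q − q⁻¹)²)·K^{n+2}FⁿE^{n−1}`
`+ q^{−n−1}·((qⁿ − q⁻ⁿ)/(q − q⁻¹)²)·KⁿFⁿE^{n−1}` in `U_q(sl_2)`. -/
theorem stmt7 (q : ℂ) (hq0 : q ≠ 0) (hq1 : q ^ 2 ≠ 1)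
    (A : Type*) [Ring A] [Algebra ℂ A] (K Ki E F : A)
    (hKKi : K * Ki = 1) (hKiK : Ki * K = 1)
    (hKE : K * E = (q ^ 2) • (E * K))
    (hKF : K * F = (q ^ 2)⁻¹ • (F * K))
    (hEF : E * F - F * E = (q - q⁻¹)⁻¹ • (K - Ki))
    (n : ℕ) (hn : 1 ≤ n) :
    adF F Ki K (K ^ (n + 1) * F ^ n * E ^ n)
      = (q ^ (2 * n + 2) - 1) • (K ^ (n + 1) * F ^ (n + 1) * E ^ n)
        - (q ^ (n + 1) * ((q ^ (n : ℤ) - q ^ (-(n : ℤ))) / (q - q⁻¹) ^ 2))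
            • (K ^ (n + 2) * F ^ n * E ^ (n - 1))
        + (q ^ (-(n : ℤ) - 1) * ((q ^ (n : ℤ) - q ^ (-(n : ℤ))) / (q - q⁻¹) ^ 2))
            • (K ^ n * F ^ n * E ^ (n - 1)) := by
  obtain ⟨m, rfl⟩ : ∃ m, n = m + 1 := ⟨n - 1, (Nat.succ_pred_eq_of_pos hn).symm⟩
  have hq2 : (q : ℂ) ^ 2 ≠ 0 := pow_ne_zero 2 hq0
  have hq21 : q ^ 2 - 1 ≠ 0 := sub_ne_zero.mpr hq1
  have hqmq : q - q⁻¹ ≠ 0 := by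
    intro h
    apply hq1
    have h2 : q * (q - q⁻¹) = q ^ 2 - 1 := by field_simp
    rw [h, mul_zero] at h2
    exact sub_eq_zero.mp h2.symm
  -- basic single-generator relations
  have hFK : F * K = (q ^ 2) • (K * F) := by
    rw [hKF, smul_smul, mul_inv_cancel₀ hq2, one_smul]
  have hEK : E * K = ((q ^ 2)⁻¹) • (K * E) := by
    rw [hKE, smul_smul, inv_mul_cancel₀ hq2, one_smul]
  have hKiE : Ki * E = ((q ^ 2)⁻¹) • (E * Ki) := by
    have h1 : Ki * (K * E) * Ki = E * Ki := by rw [← mul_assoc, hKiK, one_mul]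
    rw [hKE, mul_smul_comm, smul_mul_assoc] at h1
    have h2 : Ki * (E * K) * Ki = Ki * E := by
      rw [mul_assoc, mul_assoc, hKKi, mul_one]
    rw [h2] at h1
    rw [← h1, smul_smul, inv_mul_cancel₀ hq2, one_smul]
  have hEKi : E * Ki = (q ^ 2) • (Ki * E) := by
    rw [hKiE, smul_smul, mul_inv_cancel₀ hq2, one_smul]
  have hFKi : F * Ki = ((q ^ 2)⁻¹) • (Ki * F) := by
    have h1 : Ki * (K * F) * Ki = F * Ki := by rw [← mul_assoc, hKiK, one_mul]
    rw [hKF, mul_smul_comm, smul_mul_assoc] at h1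
    have h2 : Ki * (F * K) * Ki = Ki * F := by
      rw [mul_assoc, mul_assoc, hKKi, mul_one]
    rw [h2] at h1
    exact h1.symm
  have hc : (q - q⁻¹)⁻¹ = q / (q ^ 2 - 1) := by
    have h : q - q⁻¹ = (q ^ 2 - 1) / q := by field_simp
    rw [h, inv_div]
  have hEF' : E * F - F * E = (q / (q ^ 2 - 1)) • (K - Ki) := by
    rw [← hc]; exact hEF
  -- powers
  have KiKp : Ki * K ^ (m + 2) = K ^ (m + 1) := by
    rw [pow_succ', ← mul_assoc, hKiK, one_mul]
  have KpKi : K ^ (m + 2) * Ki = K ^ (m + 1) := by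
    rw [pow_succ, mul_assoc, hKKi, mul_one]
  have hFKn : F * K ^ (m + 2) = (q ^ 2) ^ (m + 2) • (K ^ (m + 2) * F) :=
    pow_comm_right' (q ^ 2) F K hFK (m + 2)
  have hEnK : E ^ (m + 1) * K = ((q ^ 2)⁻¹) ^ (m + 1) • (K * E ^ (m + 1)) :=
    pow_comm_left' ((q ^ 2)⁻¹) E K hEK (m + 1)
  have hEmK : E ^ m * K = ((q ^ 2)⁻¹) ^ m • (K * E ^ m) :=
    pow_comm_left' ((q ^ 2)⁻¹) E K hEK m
  have hEmKi : E ^ m * Ki = (q ^ 2) ^ m • (Ki * E ^ m) :=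
    pow_comm_left' (q ^ 2) E Ki hEKi m
  have hFnK : F ^ (m + 1) * K = (q ^ 2) ^ (m + 1) • (K * F ^ (m + 1)) :=
    pow_comm_left' (q ^ 2) F K hFK (m + 1)
  have hFnKi : F ^ (m + 1) * Ki = ((q ^ 2)⁻¹) ^ (m + 1) • (Ki * F ^ (m + 1)) :=
    pow_comm_left' ((q ^ 2)⁻¹) F Ki hFKi (m + 1)
  -- term 1
  have t1 : F * (K ^ (m + 2) * F ^ (m + 1) * E ^ (m + 1))
      = (q ^ 2) ^ (m + 2) • (K ^ (m + 2) * F ^ (m + 2) * E ^ (m + 1)) := by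
    rw [← mul_assoc, ← mul_assoc, hFKn, smul_mul_assoc, smul_mul_assoc,
      mul_assoc (K ^ (m + 2)), ← pow_succ']
  -- term 2
  have t2 : Ki * (K ^ (m + 2) * F ^ (m + 1) * E ^ (m + 1)) * K * F
      = K ^ (m + 2) * F ^ (m + 1) * (E ^ (m + 1) * F) := by
    have e11 : m + 1 + 1 = m + 2 := rfl
    rw [← mul_assoc Ki, ← mul_assoc Ki, KiKp]
    rw [mul_assoc (K ^ (m + 1) * F ^ (m + 1)), hEnK, mul_smul_comm,
      ← mul_assoc (K ^ (m + 1) * F ^ (m + 1)) K,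
      mul_assoc (K ^ (m + 1)) (F ^ (m + 1)) K, hFnK, mul_smul_comm]
    simp only [smul_mul_assoc, smul_smul]
    rw [← mul_assoc (K ^ (m + 1)) K, ← pow_succ, e11,
      inv_pow, inv_mul_cancel₀ (pow_ne_zero (m + 1) hq2), one_smul,
      mul_assoc (K ^ (m + 2) * F ^ (m + 1))]
  -- commutator
  have t3 := EnF_comm' q hq0 hq1 K Ki E F hKE hKiE hEF' m
  -- moving K / Ki leftward in the correction terms
  have t4 : K ^ (m + 2) * F ^ (m + 1) * (E ^ m * K)
      = (((q ^ 2)⁻¹) ^ m * (q ^ 2) ^ (m + 1)) • (K ^ (m + 2 + 1) * F ^ (m + 1) * E ^ m) := by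
    rw [hEmK, mul_smul_comm, ← mul_assoc (K ^ (m + 2) * F ^ (m + 1)) K,
      mul_assoc (K ^ (m + 2)) (F ^ (m + 1)) K, hFnK, mul_smul_comm]
    simp only [smul_mul_assoc, smul_smul]
    rw [← mul_assoc (K ^ (m + 2)) K, ← pow_succ]
  have t5 : K ^ (m + 2) * F ^ (m + 1) * (E ^ m * Ki)
      = ((q ^ 2) ^ m * ((q ^ 2)⁻¹) ^ (m + 1)) • (K ^ (m + 1) * F ^ (m + 1) * E ^ m) := by
    rw [hEmKi, mul_smul_comm, ← mul_assoc (K ^ (m + 2) * F ^ (m + 1)) Ki,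
      mul_assoc (K ^ (m + 2)) (F ^ (m + 1)) Ki, hFnKi, mul_smul_comm]
    simp only [smul_mul_assoc, smul_smul]
    rw [← mul_assoc (K ^ (m + 2)) Ki, KpKi]
  -- put everything together
  have t0 : K ^ (m + 2) * F ^ (m + 1) * (F * E ^ (m + 1))
      = K ^ (m + 2) * F ^ (m + 2) * E ^ (m + 1) := by
    have e11 : m + 1 + 1 = m + 2 := rfl
    rw [← mul_assoc (K ^ (m + 2) * F ^ (m + 1)) F,
      mul_assoc (K ^ (m + 2)) (F ^ (m + 1)) F, ← pow_succ, e11]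
  unfold adF
  simp only [add_assoc, Nat.reduceAdd, Nat.add_sub_cancel]
  rw [t2, t3, mul_sub (K ^ (m + 2) * F ^ (m + 1)), mul_add (K ^ (m + 2) * F ^ (m + 1)),
    mul_smul_comm, mul_smul_comm, t4, t5, t1, t0]
  simp only [add_assoc, Nat.reduceAdd, smul_smul]
  have hz1 : q ^ ((↑(m + 1) : ℤ)) = q ^ (m + 1) := by
    rw [zpow_natCast]
  have hz2 : q ^ (-(↑(m + 1) : ℤ)) = (q ^ (m + 1))⁻¹ := by
    rw [zpow_neg, zpow_natCast]
  have hz3 : q ^ (-(↑(m + 1) : ℤ) - 1) = (q ^ (m + 2))⁻¹ := by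
    rw [zpow_sub₀ hq0, zpow_neg, zpow_natCast, zpow_one, ← inv_mul_eq_div,
      ← mul_inv, ← pow_succ']
  have hqq2 : (q - q⁻¹) ^ 2 = (q ^ 2 - 1) ^ 2 / q ^ 2 := by
    field_simp
  rw [hz1, hz2, hz3, hqq2]
  match_scalars
  · ring
  · simp only [inv_pow]
    field_simp [pow_ne_zero m hq0, pow_ne_zero (m + 1) hq0, pow_ne_zero (m + 2) hq0]
    ring
  · simp only [inv_pow]
    field_simp [pow_ne_zero m hq0, pow_ne_zero (m + 1) hq0, pow_ne_zero (m + 2) hq0]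
    ring
end
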